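/- For every consistent propositional base K and every formula φ, the following statements are equivalent: K ⊢ φ, K ⊩₁ φ, K ⊩₂ φ, K ⊩₁^B φ, and K ⊩₂^B φ. -/

import Mathlib

namespace Occ

/-- Propositional formulas over variables indexed by `ℕ`,
built from variables using negation and conjunction. -/
inductive Form : Type where
  | var : ℕ → Form
  | neg : Form → Form
  | conj : Form → Form → Form
deriving DecidableEq

/-- Boolean evaluation of a formula under an interpretation `w`. -/
def eval (w : ℕ → Bool) : Form → Bool
  | .var p => w p
  | .neg φ => !(eval w φ)
  | .conj φ ψ => eval w φ && eval w ψ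

/-- The variables occurring in a formula. -/
def vars : Form → Finset ℕ
  | .var p => {p}
  | .neg φ => vars φ
  | .conj φ ψ => vars φ ∪ vars ψ

/-- A step in a path addressing a subformula occurrence. -/
inductive Step : Type where
  | neg | left | right
deriving DecidableEq

/-- `occAt φ l pol = some (p, pol')` iff the path `l` addresses an occurrence of the
variable `p` in `φ`, and this occurrence has polarity `pol'` (`true` = positive)
when the ambient polarity of `φ` is `pol`. -/
def occAt : Form → List Step → Bool → Option (ℕ × Bool)
  | .var p, [], pol => some (p, pol)
  | .neg φ, .neg :: l, pol => occAt φ l (!pol)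
  | .conj φ _, .left :: l, pol => occAt φ l pol
  | .conj _ ψ, .right :: l, pol => occAt ψ l pol
  | _, _, _ => none

/-- A variable occurrence in a base: a formula together with a path into it. -/
abbrev Occurrence : Type := Form × List Step

/-- A propositional base: a finite set of formulas. -/
abbrev PB : Type := Finset Form

/-- `o` is a variable occurrence in the base `K`. -/
def IsOcc (K : PB) (o : Occurrence) : Prop :=
  o.1 ∈ K ∧ ∃ p pol, occAt o.1 o.2 true = some (p, pol)

/-- `o` is an occurrence of the variable `p` in `K`, of polarity `pol`. -/
def IsOccOf (K : PB) (o : Occurrence) (p : ℕ) (pol : Bool) : Prop :=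
  o.1 ∈ K ∧ occAt o.1 o.2 true = some (p, pol)

/-- `o` is an occurrence of the variable `p` in `K`. -/
def IsOccVar (K : PB) (o : Occurrence) (p : ℕ) : Prop :=
  ∃ pol, IsOccOf K o p pol

/-- `o` is a positive variable occurrence in `K`. -/
def IsPosOcc (K : PB) (o : Occurrence) : Prop := ∃ p, IsOccOf K o p true

/-- `o` is a negative variable occurrence in `K`. -/
def IsNegOcc (K : PB) (o : Occurrence) : Prop := ∃ p, IsOccOf K o p false

/-- `o` and `o'` are occurrences of the same variable. -/
def sameVar (o o' : Occurrence) : Prop :=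
  ∃ p pol pol', occAt o.1 o.2 true = some (p, pol) ∧ occAt o'.1 o'.2 true = some (p, pol')

/-- The variables occurring in a base. -/
def varsPB (K : PB) : Finset ℕ := K.sup vars

/-- `w` is a (Boolean) model of the base `K` (i.e. of the conjunction of its formulas). -/
def modelsPB (w : ℕ → Bool) (K : PB) : Prop := ∀ φ ∈ K, eval w φ = true

/-- A base is consistent iff the conjunction of its formulas has a model. -/
def ConsistentPB (K : PB) : Prop := ∃ w, modelsPB w K

/-- Classical entailment from a base. -/
def Entails (K : PB) (φ : Form) : Prop := ∀ w, modelsPB w K → eval w φ = true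

/-- Rename every variable occurrence of a formula, the new variable of the
occurrence at path `l` being `f l`. -/
def renameBy : (List Step → ℕ) → Form → Form
  | f, .var _ => .var (f [])
  | f, .neg φ => .neg (renameBy (fun l => f (.neg :: l)) φ)
  | f, .conj φ ψ =>
      .conj (renameBy (fun l => f (.left :: l)) φ) (renameBy (fun l => f (.right :: l)) ψ)

/-- The formula `φ` (viewed as a member of a base) with each occurrence `o`
replaced by the variable `R o`. -/
def renameForm (R : Occurrence → ℕ) (φ : Form) : Form :=
  renameBy (fun l => R (φ, l)) φ

/-- A C-renaming of `K`: it assigns a pairwise distinct fresh variable to each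
occurrence of `K`. -/
structure IsCRenaming (K : PB) (R : Occurrence → ℕ) : Prop where
  fresh : ∀ o, IsOcc K o → R o ∉ varsPB K
  inj : ∀ o o', IsOcc K o → IsOcc K o' → R o = R o' → o = o'

/-- Binary relations on occurrences, viewed as sets of ordered pairs. -/
abbrev Rel : Type := Set (Occurrence × Occurrence)

/-- `r` is an equivalence relation on `Occ(K)`. -/
structure IsEquivOn (K : PB) (r : Rel) : Prop where
  dom : ∀ q ∈ r, IsOcc K q.1 ∧ IsOcc K q.2
  refl : ∀ o, IsOcc K o → (o, o) ∈ r
  symm : ∀ q ∈ r, (q.2, q.1) ∈ r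
  trans : ∀ a b c : Occurrence, (a, b) ∈ r → (b, c) ∈ r → (a, c) ∈ r

/-- Compliance: related occurrences are occurrences of the same variable. -/
def Compliant (r : Rel) : Prop := ∀ q ∈ r, sameVar q.1 q.2

/-- Consistency of the formula `⋀R(K) ∧ ⋀_{(o,o')∈r} (R(o) ↔ R(o'))`. -/
def RelConsistent (K : PB) (R : Occurrence → ℕ) (r : Rel) : Prop :=
  ∃ w : ℕ → Bool, (∀ φ ∈ K, eval w (renameForm R φ) = true) ∧
    ∀ q ∈ r, w (R q.1) = w (R q.2)

/-- Minimal Inconsistency Relation of `K` (w.r.t. the C-renaming `R`). -/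
def IsMIR (K : PB) (R : Occurrence → ℕ) (r : Rel) : Prop :=
  IsEquivOn K r ∧ Compliant r ∧ ¬ RelConsistent K R r ∧
    ∀ r', IsEquivOn K r' → Compliant r' → ¬ RelConsistent K R r' → ¬ r' ⊂ r

/-- Maximal Consistency Relation of `K` (w.r.t. the C-renaming `R`). -/
def IsMCR (K : PB) (R : Occurrence → ℕ) (r : Rel) : Prop :=
  IsEquivOn K r ∧ Compliant r ∧ RelConsistent K R r ∧
    ∀ r', IsEquivOn K r' → Compliant r' → RelConsistent K R r' → ¬ r ⊂ r'

/-- The relation `∼_c^K`: relating occurrences of `K` of the same variable. -/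
def sameVarRel (K : PB) : Rel :=
  {q | IsOcc K q.1 ∧ IsOcc K q.2 ∧ sameVar q.1 q.2}

/-- `PN(r)`: related pairs consisting of a positive and a negative occurrence. -/
def PN (K : PB) (r : Rel) : Rel :=
  {q | q ∈ r ∧ IsPosOcc K q.1 ∧ IsNegOcc K q.2}

/-- A BMCR: an MCR satisfying Maximality-2. -/
def IsBMCR (K : PB) (R : Occurrence → ℕ) (r : Rel) : Prop :=
  IsMCR K R r ∧
    ∀ r', IsEquivOn K r' → Compliant r' → RelConsistent K R r' → ¬ PN K r ⊂ PN K r'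

/-- `H` is a hitting set of the collection `S`. -/
def IsHittingSet {α : Type} (S : Set (Set α)) (H : Set α) : Prop :=
  ∀ s ∈ S, (s ∩ H).Nonempty

/-- `H` is a minimal hitting set of the collection `S`. -/
def IsMinHittingSet {α : Type} (S : Set (Set α)) (H : Set α) : Prop :=
  IsHittingSet S H ∧ ∀ H', H' ⊂ H → ¬ IsHittingSet S H'

/-- `r` is `H`-maximal (for an equivalence relation `r ⊆ ∼_c^K`). -/
def IsHMaximal (K : PB) (H r : Rel) : Prop :=
  r ∩ H = ∅ ∧
    ∀ r', IsEquivOn K r' → r' ⊆ sameVarRel K → r ⊂ r' → (r' ∩ H).Nonempty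

/-- `r` is `H`-minimal (for an equivalence relation `r ⊆ ∼_c^K`). -/
def IsHMinimal (K : PB) (H r : Rel) : Prop :=
  H ⊆ r ∧ ∀ r', IsEquivOn K r' → r' ⊂ r → ¬ H ⊆ r'

/-- The set of all MIRs of `K`. -/
def MIRs (K : PB) (R : Occurrence → ℕ) : Set Rel := {r | IsMIR K R r}

/-- The set of all C-MCRs of `K`: relations `θ ⊆ ∼_c^K` with `∼_c^K ∖ θ` an MCR. -/
def CMCRs (K : PB) (R : Occurrence → ℕ) : Set Rel :=
  {θ | θ ⊆ sameVarRel K ∧ IsMCR K R (sameVarRel K \ θ)}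

/-- `ρ` is a `∼`-renaming for the equivalence relation `r` on `Occ(K)`:
it assigns a distinct variable to each equivalence class (so it is constant on
classes and distinguishes distinct classes), and any class containing all the
occurrences of a variable `p` is mapped to `p` itself. -/
def IsClassRenaming (K : PB) (r : Rel) (ρ : Occurrence → ℕ) : Prop :=
  (∀ o o', IsOcc K o → IsOcc K o' → (ρ o = ρ o' ↔ (o, o') ∈ r)) ∧
    (∀ o p, IsOccVar K o p → (∀ o', IsOccVar K o' p → (o, o') ∈ r) → ρ o = p)

/-- `σ` encodes a tuple `(q₁,…,q_m) ∈ P(ρ_∼, S)` where `S = (p₁,…,p_m)`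
enumerates `var(K) ∩ var(φ)`: it maps each shared variable `p` to a member of
`⌈ρ⌉(p)` and is the identity elsewhere. -/
def IsTupleChoice (K : PB) (φ : Form) (ρ : Occurrence → ℕ) (σ : ℕ → ℕ) : Prop :=
  (∀ p, p ∈ varsPB K → p ∈ vars φ → ∃ o, IsOccVar K o p ∧ σ p = ρ o) ∧
    (∀ p, ¬ (p ∈ varsPB K ∧ p ∈ vars φ) → σ p = p)

/-- Simultaneous substitution of variables by variables. -/
def substV (σ : ℕ → ℕ) : Form → Form
  | .var p => .var (σ p)
  | .neg φ => .neg (substV σ φ)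
  | .conj φ ψ => .conj (substV σ φ) (substV σ ψ)

/-- `ρ_∼(K) ⊢ ψ`. -/
def rhoEntails (K : PB) (ρ : Occurrence → ℕ) (ψ : Form) : Prop :=
  ∀ w : ℕ → Bool, (∀ φ ∈ K, eval w (renameForm ρ φ) = true) → eval w ψ = true

/-- The inference relation `K ⊩₁ φ`. -/
def Inf1 (K : PB) (R : Occurrence → ℕ) (φ : Form) : Prop :=
  ∀ r ρ, IsMCR K R r → IsClassRenaming K r ρ →
    ∃ σ, IsTupleChoice K φ ρ σ ∧ rhoEntails K ρ (substV σ φ)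

/-- The inference relation `K ⊩₂ φ`. -/
def Inf2 (K : PB) (R : Occurrence → ℕ) (φ : Form) : Prop :=
  ∀ r ρ, IsMCR K R r → IsClassRenaming K r ρ →
    ∀ σ, IsTupleChoice K φ ρ σ → rhoEntails K ρ (substV σ φ)

/-- The inference relation `K ⊩₁^B φ`. -/
def Inf1B (K : PB) (R : Occurrence → ℕ) (φ : Form) : Prop :=
  ∀ r ρ, IsBMCR K R r → IsClassRenaming K r ρ →
    ∃ σ, IsTupleChoice K φ ρ σ ∧ rhoEntails K ρ (substV σ φ)

/-- The inference relation `K ⊩₂^B φ`. -/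
def Inf2B (K : PB) (R : Occurrence → ℕ) (φ : Form) : Prop :=
  ∀ r ρ, IsBMCR K R r → IsClassRenaming K r ρ →
    ∀ σ, IsTupleChoice K φ ρ σ → rhoEntails K ρ (substV σ φ)

/-- `μ` is an o-model of `K`: any interpretation `w` with `w (R o) = μ o` for all
occurrences `o` of `K` is a model of `⋀R(K)`. -/
def OModel (K : PB) (R : Occurrence → ℕ) (μ : Occurrence → Bool) : Prop :=
  ∀ w : ℕ → Bool, (∀ o, IsOcc K o → w (R o) = μ o) →
    ∀ φ ∈ K, eval w (renameForm R φ) = true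

/-- `diff_a(μ)`: pairs of occurrences of the same variable on which `μ` differs. -/
def diffA (K : PB) (μ : Occurrence → Bool) : Rel :=
  {q | IsOcc K q.1 ∧ IsOcc K q.2 ∧ sameVar q.1 q.2 ∧ μ q.1 ≠ μ q.2}

/-- `μ` is an a-minimal o-model of `K`. -/
def AMinOModel (K : PB) (R : Occurrence → ℕ) (μ : Occurrence → Bool) : Prop :=
  OModel K R μ ∧ ∀ μ', OModel K R μ' → ¬ diffA K μ' ⊂ diffA K μ

/-- A Boolean interpretation `w` is compatible with an o-interpretation `μ`. -/
def Compatible (K : PB) (μ : Occurrence → Bool) (w : ℕ → Bool) : Prop :=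
  ∀ p ∈ varsPB K, ∃ o, IsOccVar K o p ∧ w p = μ o

/-- The inference relation `K ⊩_{a1} φ`. -/
def InfA1 (K : PB) (R : Occurrence → ℕ) (φ : Form) : Prop :=
  ∀ μ, AMinOModel K R μ → ∃ w, Compatible K μ w ∧ eval w φ = true

/-- The inference relation `K ⊩_{a2} φ`. -/
def InfA2 (K : PB) (R : Occurrence → ℕ) (φ : Form) : Prop :=
  ∀ μ, AMinOModel K R μ → ∀ w, Compatible K μ w → eval w φ = true

/-- LP_m evaluation: an LP_m interpretation assigns a (nonempty) set of truth
values to each variable; it extends to formulas pointwise. -/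
def lpEval (lam : ℕ → Set Bool) : Form → Set Bool
  | .var p => lam p
  | .neg φ => (fun v => !v) '' lpEval lam φ
  | .conj φ ψ => Set.image2 (· && ·) (lpEval lam φ) (lpEval lam ψ)

/-- `lam` is an LP_m interpretation: each variable gets a nonempty set of values. -/
def IsLPInterp (lam : ℕ → Set Bool) : Prop := ∀ p, (lam p).Nonempty

/-- `lam` is an LP_m model of `⋀K`. -/
def LPModelPB (lam : ℕ → Set Bool) (K : PB) : Prop := ∀ φ ∈ K, true ∈ lpEval lam φ

/-- `λ! = {p : λ(p) = {0,1}}`. -/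
def lpBang (lam : ℕ → Set Bool) : Set ℕ := {p | lam p = Set.univ}

/-- `lam` is a minimal LP_m model of `⋀K`. -/
def MinLPModelPB (K : PB) (lam : ℕ → Set Bool) : Prop :=
  IsLPInterp lam ∧ LPModelPB lam K ∧
    ∀ lam', IsLPInterp lam' → LPModelPB lam' K → ¬ lpBang lam' ⊂ lpBang lam

/-- `K ⊢_{LPm} φ`. -/
def LPmEntails (K : PB) (φ : Form) : Prop :=
  ∀ lam, MinLPModelPB K lam → true ∈ lpEval lam φ

/-- Replace the subformula occurrence of `φ` addressed by the path `l` by `ψ`. -/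
def replaceAt : Form → List Step → Form → Form
  | _, [], ψ => ψ
  | .neg φ, .neg :: l, ψ => .neg (replaceAt φ l ψ)
  | .conj φ χ, .left :: l, ψ => .conj (replaceAt φ l ψ) χ
  | .conj φ χ, .right :: l, ψ => .conj φ (replaceAt χ l ψ)
  | φ, _, _ => φ

/-- The equivalence relation `∼_λ` induced on `Occ(K)` by an LP_m interpretation:
its classes are `Occ(p,K)` for `|λ(p)| = 1` and `PosOcc(p,K)`, `NegOcc(p,K)` for
`λ(p) = {0,1}`. -/
def lamRel (K : PB) (lam : ℕ → Set Bool) : Rel :=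
  {q | ∃ p pol pol', IsOccOf K q.1 p pol ∧ IsOccOf K q.2 p pol' ∧
    (lam p = Set.univ → pol = pol')}

open scoped Classical in
/-- The o-interpretation `μ_λ^K` associated with an LP_m interpretation `λ`. -/
noncomputable def muOf (lam : ℕ → Set Bool) (o : Occurrence) : Bool :=
  match occAt o.1 o.2 true with
  | some (p, pol) =>
      if lam p = ({false} : Set Bool) then false
      else if lam p = ({true} : Set Bool) then true
      else pol
  | none => false

end Occ

/-! The classical model of `K` lifts to the renamed base with all occurrences of a variable
identified, so the full same-variable relation `∼_c` is consistent. Every compliant equivalence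
is contained in `∼_c`, hence `∼_c` is the unique MCR and the unique BMCR. Its class renaming sends
each occurrence back to its own variable, so `ρ_∼(K) = K` and the only admissible tuple is the
identity; each of the four relations thus reduces to `K ⊢ φ`. -/

namespace Occ

/-- Junk value `0` when the path addresses no variable. -/
def varOf (o : Occurrence) : ℕ :=
  match occAt o.1 o.2 true with
  | some (p, _) => p
  | none => 0

theorem varOf_eq {o : Occurrence} {p : ℕ} {pol : Bool}
    (h : occAt o.1 o.2 true = some (p, pol)) : varOf o = p := by
  unfold varOf; rw [h]

theorem mem_sameVarRel {K : PB} {q : Occurrence × Occurrence} :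
    q ∈ sameVarRel K ↔ IsOcc K q.1 ∧ IsOcc K q.2 ∧ varOf q.1 = varOf q.2 := by
  constructor
  · rintro ⟨h₁, h₂, p, pol, pol', hp, hp'⟩
    exact ⟨h₁, h₂, (varOf_eq hp).trans (varOf_eq hp').symm⟩
  · rintro ⟨h₁, h₂, heq⟩
    obtain ⟨p, pol, hp⟩ := h₁.2
    obtain ⟨p', pol', hp'⟩ := h₂.2
    rw [varOf_eq hp, varOf_eq hp'] at heq
    exact ⟨h₁, h₂, p, pol, pol', hp, heq ▸ hp'⟩

theorem eval_renameBy {w w' : ℕ → Bool} :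
    ∀ (φ : Form) (f : List Step → ℕ) (pol : Bool),
      (∀ l p pol', occAt φ l pol = some (p, pol') → w' (f l) = w p) →
      eval w' (renameBy f φ) = eval w φ
  | .var p, f, pol, h => h [] p pol rfl
  | .neg φ, f, pol, h => by
    simp only [renameBy, eval, eval_renameBy φ _ (!pol) fun l => h (.neg :: l)]
  | .conj φ ψ, f, pol, h => by
    simp only [renameBy, eval, eval_renameBy φ _ pol fun l => h (.left :: l),
      eval_renameBy ψ _ pol fun l => h (.right :: l)]

theorem renameBy_eq_self :
    ∀ (φ : Form) (f : List Step → ℕ) (pol : Bool),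
      (∀ l p pol', occAt φ l pol = some (p, pol') → f l = p) → renameBy f φ = φ
  | .var p, f, pol, h => by rw [renameBy, h [] p pol rfl]
  | .neg φ, f, pol, h => by
    rw [renameBy, renameBy_eq_self φ _ (!pol) fun l => h (.neg :: l)]
  | .conj φ ψ, f, pol, h => by
    rw [renameBy, renameBy_eq_self φ _ pol fun l => h (.left :: l),
      renameBy_eq_self ψ _ pol fun l => h (.right :: l)]

theorem exists_occAt_of_mem_vars {p : ℕ} :
    ∀ (φ : Form), p ∈ vars φ → ∀ pol, ∃ l pol', occAt φ l pol = some (p, pol')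
  | .var q, h, pol => ⟨[], pol, by rw [Finset.mem_singleton.mp h]; rfl⟩
  | .neg φ, h, pol => by
    obtain ⟨l, pol', hl⟩ := exists_occAt_of_mem_vars φ h (!pol)
    exact ⟨.neg :: l, pol', hl⟩
  | .conj φ ψ, h, pol => by
    rcases Finset.mem_union.mp h with h | h
    · obtain ⟨l, pol', hl⟩ := exists_occAt_of_mem_vars φ h pol
      exact ⟨.left :: l, pol', hl⟩
    · obtain ⟨l, pol', hl⟩ := exists_occAt_of_mem_vars ψ h pol
      exact ⟨.right :: l, pol', hl⟩

theorem substV_id : ∀ φ : Form, substV id φ = φ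
  | .var _ => rfl
  | .neg φ => by rw [substV, substV_id φ]
  | .conj φ ψ => by rw [substV, substV_id φ, substV_id ψ]

section SameVarRel

variable {K : PB} {R : Occurrence → ℕ}

theorem isEquivOn_sameVarRel (K : PB) : IsEquivOn K (sameVarRel K) where
  dom q hq := ⟨hq.1, hq.2.1⟩
  refl o ho := mem_sameVarRel.mpr ⟨ho, ho, rfl⟩
  symm q hq := by
    obtain ⟨h₁, h₂, heq⟩ := mem_sameVarRel.mp hq
    exact mem_sameVarRel.mpr ⟨h₂, h₁, heq.symm⟩
  trans a b c hab hbc := by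
    obtain ⟨ha, -, hab⟩ := mem_sameVarRel.mp hab
    obtain ⟨-, hc, hbc⟩ := mem_sameVarRel.mp hbc
    exact mem_sameVarRel.mpr ⟨ha, hc, hab.trans hbc⟩

theorem compliant_sameVarRel (K : PB) : Compliant (sameVarRel K) :=
  fun _ hq => hq.2.2

theorem IsEquivOn.subset_sameVarRel {r : Rel} (he : IsEquivOn K r) (hc : Compliant r) :
    r ⊆ sameVarRel K :=
  fun q hq => ⟨(he.dom q hq).1, (he.dom q hq).2, hc q hq⟩

theorem relConsistent_sameVarRel (hR : IsCRenaming K R) (hK : ConsistentPB K) :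
    RelConsistent K R (sameVarRel K) := by
  obtain ⟨w, hw⟩ := hK
  have : Nonempty Occurrence := ⟨(.var 0, [])⟩
  have hinj : Set.InjOn R {o | IsOcc K o} := fun o ho o' ho' h => hR.inj o o' ho ho' h
  -- the renamed variable `R o` receives the value of the variable of `o`
  let w' : ℕ → Bool := fun n => w (varOf (Function.invFunOn R {o | IsOcc K o} n))
  have hw' : ∀ o, IsOcc K o → w' (R o) = w (varOf o) := fun o ho => by
    simp only [w', hinj.leftInvOn_invFunOn ho]
  refine ⟨w', fun ψ hψ => ?_, fun q hq => ?_⟩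
  · rw [renameForm, eval_renameBy ψ _ true fun l p pol hl => ?_]
    · exact hw ψ hψ
    · rw [hw' _ ⟨hψ, p, pol, hl⟩, varOf_eq hl]
  · obtain ⟨h₁, h₂, heq⟩ := mem_sameVarRel.mp hq
    rw [hw' _ h₁, hw' _ h₂, heq]

theorem isMCR_iff (hR : IsCRenaming K R) (hK : ConsistentPB K) {r : Rel} :
    IsMCR K R r ↔ r = sameVarRel K := by
  constructor
  · rintro ⟨he, hc, -, hmax⟩
    by_contra hne
    exact hmax _ (isEquivOn_sameVarRel K) (compliant_sameVarRel K)
      (relConsistent_sameVarRel hR hK) ((he.subset_sameVarRel hc).ssubset_of_ne hne)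
  · rintro rfl
    refine ⟨isEquivOn_sameVarRel K, compliant_sameVarRel K, relConsistent_sameVarRel hR hK, ?_⟩
    exact fun r' he hc _ hsub => hsub.not_subset (he.subset_sameVarRel hc)

theorem isBMCR_iff (hR : IsCRenaming K R) (hK : ConsistentPB K) {r : Rel} :
    IsBMCR K R r ↔ r = sameVarRel K := by
  refine ⟨fun h => (isMCR_iff hR hK).mp h.1, ?_⟩
  rintro rfl
  refine ⟨(isMCR_iff hR hK).mpr rfl, fun r' he hc _ hsub => hsub.not_subset ?_⟩
  exact fun q ⟨hq, hpos, hneg⟩ => ⟨he.subset_sameVarRel hc hq, hpos, hneg⟩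

end SameVarRel

section ClassRenaming

variable {K : PB} {ρ : Occurrence → ℕ}

theorem isClassRenaming_varOf (K : PB) : IsClassRenaming K (sameVarRel K) varOf := by
  refine ⟨fun o o' ho ho' => ?_, fun o p ⟨_, _, hp⟩ _ => varOf_eq hp⟩
  simp only [mem_sameVarRel, ho, ho', true_and]

theorem IsClassRenaming.apply_eq (hρ : IsClassRenaming K (sameVarRel K) ρ) {o : Occurrence}
    {p : ℕ} (ho : IsOccVar K o p) : ρ o = p := by
  obtain ⟨pol, hmem, hp⟩ := ho
  refine hρ.2 o p ⟨pol, hmem, hp⟩ fun o' ⟨pol', hmem', hp'⟩ => ?_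
  exact ⟨⟨hmem, p, pol, hp⟩, ⟨hmem', p, pol', hp'⟩, p, pol, pol', hp, hp'⟩

theorem IsClassRenaming.renameForm_eq (hρ : IsClassRenaming K (sameVarRel K) ρ) {ψ : Form}
    (hψ : ψ ∈ K) : renameForm ρ ψ = ψ :=
  renameBy_eq_self ψ _ true fun _ _ pol hl => hρ.apply_eq ⟨pol, hψ, hl⟩

theorem IsClassRenaming.rhoEntails_iff (hρ : IsClassRenaming K (sameVarRel K) ρ) {χ : Form} :
    rhoEntails K ρ χ ↔ Entails K χ := by
  have hK : ∀ w, (∀ ψ ∈ K, eval w (renameForm ρ ψ) = true) ↔ modelsPB w K := fun w =>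
    forall₂_congr fun ψ hψ => by rw [hρ.renameForm_eq hψ]
  simp only [rhoEntails, Entails, hK]

theorem IsClassRenaming.isTupleChoice_iff (hρ : IsClassRenaming K (sameVarRel K) ρ)
    {φ : Form} {σ : ℕ → ℕ} : IsTupleChoice K φ ρ σ ↔ σ = id := by
  constructor
  · refine fun hσ => funext fun p => ?_
    by_cases hp : p ∈ varsPB K ∧ p ∈ vars φ
    · obtain ⟨o, ho, hσp⟩ := hσ.1 p hp.1 hp.2
      rw [hσp, hρ.apply_eq ho, id]
    · exact hσ.2 p hp
  · rintro rfl
    refine ⟨fun p hpK _ => ?_, fun _ _ => rfl⟩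
    obtain ⟨ψ, hψ, hp⟩ := Finset.mem_sup.mp hpK
    obtain ⟨l, pol, hl⟩ := exists_occAt_of_mem_vars ψ hp true
    exact ⟨(ψ, l), ⟨pol, hψ, hl⟩, (hρ.apply_eq ⟨pol, hψ, hl⟩).symm⟩

theorem IsClassRenaming.rhoEntails_substV_iff (hρ : IsClassRenaming K (sameVarRel K) ρ)
    {φ : Form} {σ : ℕ → ℕ} (hσ : IsTupleChoice K φ ρ σ) :
    rhoEntails K ρ (substV σ φ) ↔ Entails K φ := by
  rw [hρ.isTupleChoice_iff.mp hσ, substV_id, hρ.rhoEntails_iff]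

end ClassRenaming

section Inference

variable {K : PB} {φ : Form} {P : Rel → Prop}

theorem forall_exists_tupleChoice_iff_entails (hP : ∀ r, P r ↔ r = sameVarRel K) :
    (∀ r ρ, P r → IsClassRenaming K r ρ →
      ∃ σ, IsTupleChoice K φ ρ σ ∧ rhoEntails K ρ (substV σ φ)) ↔ Entails K φ := by
  constructor
  · intro h
    obtain ⟨σ, hσ, hent⟩ := h _ _ ((hP _).mpr rfl) (isClassRenaming_varOf K)
    exact ((isClassRenaming_varOf K).rhoEntails_substV_iff hσ).mp hent
  · intro h r ρ hr hρ
    obtain rfl := (hP r).mp hr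
    have hid : IsTupleChoice K φ ρ id := hρ.isTupleChoice_iff.mpr rfl
    exact ⟨id, hid, (hρ.rhoEntails_substV_iff hid).mpr h⟩

theorem forall_forall_tupleChoice_iff_entails (hP : ∀ r, P r ↔ r = sameVarRel K) :
    (∀ r ρ, P r → IsClassRenaming K r ρ →
      ∀ σ, IsTupleChoice K φ ρ σ → rhoEntails K ρ (substV σ φ)) ↔ Entails K φ := by
  constructor
  · intro h
    have hρ := isClassRenaming_varOf K
    have hid : IsTupleChoice K φ varOf id := hρ.isTupleChoice_iff.mpr rfl
    exact (hρ.rhoEntails_substV_iff hid).mp (h _ _ ((hP _).mpr rfl) hρ id hid)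
  · intro h r ρ hr hρ σ hσ
    obtain rfl := (hP r).mp hr
    exact (hρ.rhoEntails_substV_iff hσ).mpr h

end Inference

end Occ

/-- Proposition 8: on a consistent base, the four MCR-based
inference relations all coincide with classical entailment. -/
theorem consistent_inference_relations_coincide (K : Occ.PB)
    (R : Occ.Occurrence → ℕ) (hR : Occ.IsCRenaming K R)
    (hK : Occ.ConsistentPB K) (φ : Occ.Form) :
    (Occ.Entails K φ ↔ Occ.Inf1 K R φ) ∧
    (Occ.Entails K φ ↔ Occ.Inf2 K R φ) ∧
    (Occ.Entails K φ ↔ Occ.Inf1B K R φ) ∧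
    (Occ.Entails K φ ↔ Occ.Inf2B K R φ) := by
  have hMCR := fun r => Occ.isMCR_iff (r := r) hR hK
  have hBMCR := fun r => Occ.isBMCR_iff (r := r) hR hK
  exact ⟨(Occ.forall_exists_tupleChoice_iff_entails hMCR).symm,
    (Occ.forall_forall_tupleChoice_iff_entails hMCR).symm,
    (Occ.forall_exists_tupleChoice_iff_entails hBMCR).symm,
    (Occ.forall_forall_tupleChoice_iff_entails hBMCR).symm⟩
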